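/- arXiv:1304.2694 — 3 statements merged into one kernel-verified Lean document; each statement's English description precedes it below -/
import Mathlib

section
/- (Lemma 1) For any assignment s ∈ Ω, the marginal density conditioned on the orbit of s has the closed form: (1/|s^G|) · Σ_{x ∈ s^G} 𝟙[x ∘ X̂ = x̂] = H(s) / M, where s^G denotes the G-orbit of s, H(s) is the orbit Hamming weight of s, and M is the size of the G-orbit of the tuple X̂. -/
open scoped Classical
open Finset

/-- Action of a permutation of `Fin n` on an assignment `s : Fin n → V`:
`(g • s) i := s (g⁻¹ i)`. -/
def permAct {n : ℕ} {V : Type*} (g : Equiv.Perm (Fin n)) (s : Fin n → V) : Fin n → V :=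
  fun i => s (g⁻¹ i)

/-- Action of a permutation of `Fin n` on a tuple of indices `X : Fin k → Fin n`:
`(g • X) j := g (X j)`. -/
def tupleAct {n k : ℕ} (g : Equiv.Perm (Fin n)) (X : Fin k → Fin n) : Fin k → Fin n :=
  fun j => g (X j)

/-- The `G`-orbit of an assignment `s`, as a finset of the assignment space. -/
noncomputable def assignOrbit {n : ℕ} {V : Type*} [Fintype V]
    (G : Subgroup (Equiv.Perm (Fin n))) (s : Fin n → V) : Finset (Fin n → V) :=
  Finset.univ.filter (fun x => ∃ g ∈ G, permAct g s = x)

/-- The `G`-orbit of a tuple of indices, as a finset. -/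
noncomputable def tupleOrbit {n k : ℕ} (G : Subgroup (Equiv.Perm (Fin n)))
    (X : Fin k → Fin n) : Finset (Fin k → Fin n) :=
  Finset.univ.filter (fun A => ∃ g ∈ G, tupleAct g X = A)

/-- The orbit Hamming weight of `s` w.r.t. the marginal assignment `X̂ = x̂`:
the number of tuples `A` in the `G`-orbit of `X̂` with `s ∘ A = x̂`. -/
noncomputable def orbitHammingWeight {n k : ℕ} {V : Type*} [Fintype V] [DecidableEq V]
    (G : Subgroup (Equiv.Perm (Fin n))) (X : Fin k → Fin n) (xhat : Fin k → V)
    (s : Fin n → V) : ℕ :=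
  ((tupleOrbit G X).filter (fun A => s ∘ A = xhat)).card


/-!
Both sides are orbit averages, and an average over the orbit of a point under a finite group
equals the average over the group itself, since every fibre of `g ↦ g • x` is a coset of the
stabilizer. Averaging over `g ∈ G`, the indicator of `(g • s) ∘ X̂ = x̂` is the indicator of
`s ∘ (g⁻¹ • X̂) = x̂`, so after the substitution `g ↦ g⁻¹` the left side becomes the average over
the orbit of `X̂` of the indicator counted by `H(s)`.
-/

namespace MulAction

variable {Γ α : Type*} [Group Γ] [Fintype Γ] [MulAction Γ α] [DecidableEq α]

theorem card_fiber_eq_card_stabilizer (x : α) (g₀ : Γ) :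
    #{g : Γ | g • x = g₀ • x} = #{g : Γ | g • x = x} :=
  Finset.card_nbij' (g₀⁻¹ * ·) (g₀ * ·)
    (fun g hg => by simp_all [mul_smul])
    (fun g hg => by simp_all [mul_smul])
    (fun g _ => by simp) (fun g _ => by simp)

theorem sum_smul_eq_card_stabilizer_nsmul_sum_orbit {M : Type*} [AddCommMonoid M]
    (x : α) (f : α → M) :
    ∑ g : Γ, f (g • x) = #{g : Γ | g • x = x} • ∑ y ∈ univ.image (· • x : Γ → α), f y := by
  rw [Finset.sum_comp, Finset.smul_sum]
  refine Finset.sum_congr rfl fun y hy => ?_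
  obtain ⟨g₀, -, rfl⟩ := Finset.mem_image.1 hy
  rw [card_fiber_eq_card_stabilizer]

theorem card_stabilizer_mul_card_orbit (x : α) :
    #{g : Γ | g • x = x} * #(univ.image (· • x : Γ → α)) = Fintype.card Γ := by
  simpa using (sum_smul_eq_card_stabilizer_nsmul_sum_orbit (Γ := Γ) x (fun _ => (1 : ℕ))).symm

theorem sum_orbit_div_card_orbit {𝕜 : Type*} [Semifield 𝕜] [CharZero 𝕜] (x : α) (f : α → 𝕜) :
    (∑ y ∈ univ.image (· • x : Γ → α), f y) / #(univ.image (· • x : Γ → α)) =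
      (∑ g : Γ, f (g • x)) / Fintype.card Γ := by
  have hstab : (#{g : Γ | g • x = x} : 𝕜) ≠ 0 :=
    Nat.cast_ne_zero.2 (Finset.card_ne_zero.2 ⟨1, by simp⟩)
  rw [sum_smul_eq_card_stabilizer_nsmul_sum_orbit, ← card_stabilizer_mul_card_orbit (Γ := Γ) x,
    nsmul_eq_mul, Nat.cast_mul, mul_div_mul_left _ _ hstab]

end MulAction

/- With `Equiv.Perm.applyMulAction` on `Fin n`, `arrowAction` is exactly `permAct`, while the
default `Pi.mulAction` on `Fin k → Fin n` is exactly `tupleAct`. -/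
attribute [local instance] arrowAction

theorem assignOrbit_eq_image {n : ℕ} {V : Type*} [Fintype V] [DecidableEq V]
    (G : Subgroup (Equiv.Perm (Fin n))) (s : Fin n → V) :
    assignOrbit G s = univ.image (· • s : G → Fin n → V) := by
  ext x
  simp only [assignOrbit, mem_filter, mem_univ, true_and, Subgroup.smul_def, mem_image,
    Subtype.exists, exists_prop]
  rfl

theorem tupleOrbit_eq_image {n k : ℕ} (G : Subgroup (Equiv.Perm (Fin n))) (X : Fin k → Fin n) :
    tupleOrbit G X = univ.image (· • X : G → Fin k → Fin n) := by
  ext A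
  simp only [tupleOrbit, mem_filter, mem_univ, true_and, Subgroup.smul_def, mem_image,
    Subtype.exists, exists_prop]
  rfl

theorem conditional_marginal_closed_form_general
    (n k : ℕ)
    (V : Type*) [Fintype V] [DecidableEq V]
    (G : Subgroup (Equiv.Perm (Fin n)))
    (Xhat : Fin k → Fin n)
    (xhat : Fin k → V)
    (s : Fin n → V) :
    (1 / ((assignOrbit G s).card : ℝ)) *
        ∑ x ∈ assignOrbit G s, (if x ∘ Xhat = xhat then (1 : ℝ) else 0) =
      (orbitHammingWeight G Xhat xhat s : ℝ) / ((tupleOrbit G Xhat).card : ℝ) := by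
  rw [one_div_mul_eq_div, assignOrbit_eq_image, MulAction.sum_orbit_div_card_orbit,
    orbitHammingWeight, ← Finset.sum_boole, tupleOrbit_eq_image, MulAction.sum_orbit_div_card_orbit]
  congr 1
  -- `(g • s) ∘ X̂ = s ∘ (g⁻¹ • X̂)` holds by definition; reindex the sum by `g ↦ g⁻¹`.
  exact (Equiv.sum_comp (Equiv.inv G) _).symm

/-- Lemma 1: the marginal density conditioned on the orbit of `s` has the
closed form `H(s) / M`. -/
theorem conditional_marginal_closed_form
    (n k : ℕ) (hn : 0 < n) (hk : 0 < k)
    (V : Type*) [Fintype V] [Nonempty V] [DecidableEq V]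
    (G : Subgroup (Equiv.Perm (Fin n)))
    (Xhat : Fin k → Fin n) (hX : Function.Injective Xhat)
    (xhat : Fin k → V)
    (s : Fin n → V) :
    (1 / ((assignOrbit G s).card : ℝ)) *
        ∑ x ∈ assignOrbit G s, (if x ∘ Xhat = xhat then (1 : ℝ) else 0) =
      (orbitHammingWeight G Xhat xhat s : ℝ) / ((tupleOrbit G Xhat).card : ℝ) :=
  conditional_marginal_closed_form_general n k V G Xhat xhat s
end

section
/- (Unbiasedness of the Rao-Blackwell estimator) If P is a G-invariant probability distribution on Ω, then the expectation of the single-sample Rao-Blackwell estimator equals the true marginal density: Σ_{s ∈ Ω} P(s) · H(s)/M = θ, where θ := Σ_{s : s ∘ X̂ = x̂} P(s). -/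
/-!
Double counting the pairs `(s, A)` with `A` in the orbit of `X̂` and `s ∘ A = x̂` gives
`∑ₛ P(s) H(s) = ∑_A P(s ∘ A = x̂)`. For `A = g • X̂` the substitution `s ↦ g • s` turns the event
`s ∘ A = x̂` into `s ∘ X̂ = x̂` and, by invariance, preserves `P`; so every summand equals `θ`
and the sum is `M θ`.
-/

open scoped Classical
open Finset

lemma sum_mul_card_filter_eq_sum_sum_filter {α β R : Type*} [CommSemiring R]
    (S : Finset α) (T : Finset β) (p : α → β → Prop) [∀ a b, Decidable (p a b)] (f : α → R) :
    ∑ a ∈ S, f a * (#{b ∈ T | p a b} : R) = ∑ b ∈ T, ∑ a ∈ S with p a b, f a := by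
  simp only [natCast_card_filter, mul_sum, mul_boole, sum_filter]
  exact sum_comm

lemma permAct_comp_tupleAct {n k : ℕ} {V : Type*} (g : Equiv.Perm (Fin n)) (s : Fin n → V)
    (X : Fin k → Fin n) : permAct g s ∘ tupleAct g X = s ∘ X := by
  funext j
  simp [permAct, tupleAct]

lemma mem_tupleOrbit_self {n k : ℕ} (G : Subgroup (Equiv.Perm (Fin n))) (X : Fin k → Fin n) :
    X ∈ tupleOrbit G X := by
  simp only [tupleOrbit, mem_filter, mem_univ, true_and]
  exact ⟨1, G.one_mem, rfl⟩

lemma sum_filter_comp_tupleAct {n k : ℕ} {V R : Type*} [Fintype V] [DecidableEq V]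
    [AddCommMonoid R]
    (P : (Fin n → V) → R) (g : Equiv.Perm (Fin n)) (hP : ∀ s, P (permAct g s) = P s)
    (X : Fin k → Fin n) (x : Fin k → V) :
    ∑ s with s ∘ tupleAct g X = x, P s = ∑ s with s ∘ X = x, P s := by
  simp only [sum_filter]
  refine (Fintype.sum_equiv (Equiv.arrowCongr g (Equiv.refl V)) _ _ fun s => ?_).symm
  change _ = if permAct g s ∘ tupleAct g X = x then P (permAct g s) else 0
  rw [permAct_comp_tupleAct, hP]

lemma sum_mul_orbitHammingWeight {n k : ℕ} {V R : Type*} [Fintype V] [DecidableEq V]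
    [CommSemiring R] (G : Subgroup (Equiv.Perm (Fin n))) (X : Fin k → Fin n) (x : Fin k → V)
    (P : (Fin n → V) → R) (hPG : ∀ g ∈ G, ∀ s, P (permAct g s) = P s) :
    ∑ s, P s * (orbitHammingWeight G X x s : R) =
      #(tupleOrbit G X) * ∑ s with s ∘ X = x, P s := by
  rw [← nsmul_eq_mul, ← sum_const]
  refine (sum_mul_card_filter_eq_sum_sum_filter _ _ (fun s A => s ∘ A = x) P).trans
    (sum_congr rfl fun A hA => ?_)
  obtain ⟨g, hg, rfl⟩ := (mem_filter.mp hA).2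
  exact sum_filter_comp_tupleAct P g (hPG g hg) X x

theorem rao_blackwell_unbiased_general
    (n k : ℕ)
    (V : Type*) [Fintype V] [DecidableEq V]
    (G : Subgroup (Equiv.Perm (Fin n)))
    (Xhat : Fin k → Fin n)
    (xhat : Fin k → V)
    (P : (Fin n → V) → ℝ)
    (hPG : ∀ g ∈ G, ∀ s : Fin n → V, P (permAct g s) = P s) :
    ∑ s : Fin n → V,
        P s * ((orbitHammingWeight G Xhat xhat s : ℝ) / ((tupleOrbit G Xhat).card : ℝ)) =
      ∑ s ∈ Finset.univ.filter (fun s : Fin n → V => s ∘ Xhat = xhat), P s := by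
  have hM : ((tupleOrbit G Xhat).card : ℝ) ≠ 0 :=
    Nat.cast_ne_zero.mpr (card_ne_zero_of_mem (mem_tupleOrbit_self G Xhat))
  simp_rw [mul_div_assoc', ← sum_div, sum_mul_orbitHammingWeight G Xhat xhat P hPG]
  exact mul_div_cancel_left₀ _ hM

/-- the single-sample Rao-Blackwell estimator is unbiased: its expectation
under a `G`-invariant distribution `P` equals the true marginal density `θ`. -/
theorem rao_blackwell_unbiased
    (n k : ℕ) (hn : 0 < n) (hk : 0 < k)
    (V : Type*) [Fintype V] [Nonempty V] [DecidableEq V]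
    (G : Subgroup (Equiv.Perm (Fin n)))
    (Xhat : Fin k → Fin n) (hX : Function.Injective Xhat)
    (xhat : Fin k → V)
    (P : (Fin n → V) → ℝ)
    (hP0 : ∀ s, 0 ≤ P s)
    (hP1 : ∑ s : Fin n → V, P s = 1)
    (hPG : ∀ g ∈ G, ∀ s : Fin n → V, P (permAct g s) = P s) :
    ∑ s : Fin n → V,
        P s * ((orbitHammingWeight G Xhat xhat s : ℝ) / ((tupleOrbit G Xhat).card : ℝ)) =
      ∑ s ∈ Finset.univ.filter (fun s : Fin n → V => s ∘ Xhat = xhat), P s :=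
  rao_blackwell_unbiased_general n k V G Xhat xhat P hPG
end

section
/- Let Q be a G-invariant row-stochastic matrix on a finite state space Ω with quotient matrix Q' on the set 𝒪 of G-orbits, and let π be a probability vector on Ω with lumped vector π'(O) := Σ_{x ∈ O} π(x). Then for every t ∈ ℕ and every state x ∈ Ω, the total variation distance of the lumped chain from π' is at most the total variation distance of the original chain from π: (1/2) Σ_{O ∈ 𝒪} |(Q')^t([x], O) − π'(O)| ≤ (1/2) Σ_{y ∈ Ω} |Q^t(x, y) − π(y)|. -/
open scoped Classical
open Finset

/-- The `t`-th power of a matrix on a finite type: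
`Q^0 = identity`, `Q^{t+1}(x,z) = Σ_y Q^t(x,y) · Q(y,z)`. -/
noncomputable def matPow {α : Type*} [Fintype α] (Q : α → α → ℝ) : ℕ → α → α → ℝ
  | 0 => fun x y => if x = y then 1 else 0
  | t + 1 => fun x z => ∑ y, matPow Q t x y * Q y z

/-- The quotient (lumped) matrix of `Q` on the set of `G`-orbits:
`Q'([x], O) := Σ_{y ∈ O} Q(x, y)`, using the canonical representative of each orbit
(this is independent of the representative when `Q` is `G`-invariant, by exact
lumpability). -/
noncomputable def quotMat (G : Type*) {Ω : Type*} [Group G] [MulAction G Ω] [Fintype Ω]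
    (Q : Ω → Ω → ℝ) (a b : Quotient (MulAction.orbitRel G Ω)) : ℝ :=
  ∑ y ∈ Finset.univ.filter
      (fun y : Ω => (⟦y⟧ : Quotient (MulAction.orbitRel G Ω)) = b),
    Q a.out y

/-- The lumped vector of `π` on the set of `G`-orbits: `π'(O) := Σ_{x ∈ O} π(x)`. -/
noncomputable def lumpVec (G : Type*) {Ω : Type*} [Group G] [MulAction G Ω] [Fintype Ω]
    (π : Ω → ℝ) (a : Quotient (MulAction.orbitRel G Ω)) : ℝ :=
  ∑ x ∈ Finset.univ.filter
      (fun x : Ω => (⟦x⟧ : Quotient (MulAction.orbitRel G Ω)) = a),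
    π x

/-!
Total variation is half the ℓ¹-norm of `Q^t(x, ·) - π`, and lumping sums it over orbits, which
can only decrease an ℓ¹-norm by the triangle inequality. The substance is that lumping commutes
with taking powers, `(Q')^t([x], O) = Σ_{y ∈ O} Q^t(x, y)`: by `G`-invariance,
`Σ_{y ∈ O} Q(x, y)` depends only on the orbit of `x`.
-/

theorem sum_abs_sum_fiberwise_le {ι κ M : Type*} [Fintype ι] [Fintype κ] [DecidableEq κ]
    [AddCommGroup M] [LinearOrder M] [IsOrderedAddMonoid M] (p : ι → κ) (f : ι → M) :
    ∑ k, |∑ i with p i = k, f i| ≤ ∑ i, |f i| :=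
  calc ∑ k, |∑ i with p i = k, f i|
      ≤ ∑ k, ∑ i with p i = k, |f i| := sum_le_sum fun _ _ => abs_sum_le_sum_abs _ _
    _ = ∑ i, |f i| := sum_fiberwise _ _ _

section Lumping

variable {G Ω : Type*} [Group G] [MulAction G Ω] [Fintype Ω]

local notation "𝒪" => Quotient (MulAction.orbitRel G Ω)

theorem sum_orbit_smul_left_eq {Q : Ω → Ω → ℝ}
    (hQG : ∀ (g : G) (x y : Ω), Q (g • x) (g • y) = Q x y) (g : G) (x : Ω) (O : 𝒪) :
    ∑ y with (⟦y⟧ : 𝒪) = O, Q (g • x) y = ∑ y with (⟦y⟧ : 𝒪) = O, Q x y := by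
  rw [sum_filter, sum_filter, ← Equiv.sum_comp (MulAction.toPerm g)]
  simp only [MulAction.toPerm_apply, MulAction.orbitRel.Quotient.quotient_smul_eq, hQG]

theorem quotMat_mk {Q : Ω → Ω → ℝ}
    (hQG : ∀ (g : G) (x y : Ω), Q (g • x) (g • y) = Q x y) (x : Ω) (O : 𝒪) :
    quotMat G Q ⟦x⟧ O = ∑ y with (⟦y⟧ : 𝒪) = O, Q x y := by
  obtain ⟨g, hg⟩ := Quotient.mk_out (s := MulAction.orbitRel G Ω) x
  rw [quotMat, ← hg, sum_orbit_smul_left_eq hQG]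

theorem matPow_quotMat_mk {Q : Ω → Ω → ℝ}
    (hQG : ∀ (g : G) (x y : Ω), Q (g • x) (g • y) = Q x y) (t : ℕ) (x : Ω) (O : 𝒪) :
    matPow (quotMat G Q) t ⟦x⟧ O = ∑ y with (⟦y⟧ : 𝒪) = O, matPow Q t x y := by
  induction t generalizing O with
  | zero => simp [matPow, sum_ite_eq, eq_comm]
  | succ t ih =>
    calc matPow (quotMat G Q) (t + 1) ⟦x⟧ O
        = ∑ O', ∑ y with (⟦y⟧ : 𝒪) = O', matPow Q t x y * quotMat G Q ⟦y⟧ O := by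
          refine sum_congr rfl fun O' _ => ?_
          rw [ih, sum_mul]
          exact sum_congr rfl fun y hy => by rw [(mem_filter.mp hy).2]
      _ = ∑ y, matPow Q t x y * ∑ z with (⟦z⟧ : 𝒪) = O, Q y z := by
          simp only [sum_fiberwise, quotMat_mk hQG]
      _ = ∑ z with (⟦z⟧ : 𝒪) = O, matPow Q (t + 1) x z := by
          simp only [mul_sum, matPow]
          exact sum_comm

end Lumping

theorem lumped_tv_le_tv_general
    {G Ω : Type*} [Group G] [Fintype Ω] [MulAction G Ω]
    (Q : Ω → Ω → ℝ)
    (hQG : ∀ (g : G) (x y : Ω), Q (g • x) (g • y) = Q x y)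
    (π : Ω → ℝ) :
    ∀ (t : ℕ) (x : Ω),
      (1 / 2) * ∑ O : Quotient (MulAction.orbitRel G Ω),
          |matPow (quotMat G Q) t (⟦x⟧ : Quotient (MulAction.orbitRel G Ω)) O -
            lumpVec G π O| ≤
        (1 / 2) * ∑ y : Ω, |matPow Q t x y - π y| := by
  intro t x
  have lumped_diff : ∀ O, matPow (quotMat G Q) t ⟦x⟧ O - lumpVec G π O =
      ∑ y with (⟦y⟧ : Quotient (MulAction.orbitRel G Ω)) = O, (matPow Q t x y - π y) := by
    intro O
    rw [matPow_quotMat_mk hQG, lumpVec, sum_sub_distrib]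
  rw [sum_congr rfl fun O _ => congrArg abs (lumped_diff O)]
  exact mul_le_mul_of_nonneg_left (sum_abs_sum_fiberwise_le _ _) (by norm_num)

/-- at every time `t` and from every start state `x`, the total variation
distance of the lumped chain from the lumped vector `π'` is at most the total variation
distance of the original chain from `π`. -/
theorem lumped_tv_le_tv
    {G Ω : Type*} [Group G] [Fintype G] [Fintype Ω] [Nonempty Ω] [MulAction G Ω]
    (Q : Ω → Ω → ℝ)
    (hQ0 : ∀ x y, 0 ≤ Q x y)
    (hQ1 : ∀ x, ∑ y, Q x y = 1)
    (hQG : ∀ (g : G) (x y : Ω), Q (g • x) (g • y) = Q x y)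
    (π : Ω → ℝ)
    (hπ0 : ∀ x, 0 ≤ π x)
    (hπ1 : ∑ x, π x = 1) :
    ∀ (t : ℕ) (x : Ω),
      (1 / 2) * ∑ O : Quotient (MulAction.orbitRel G Ω),
          |matPow (quotMat G Q) t (⟦x⟧ : Quotient (MulAction.orbitRel G Ω)) O -
            lumpVec G π O| ≤
        (1 / 2) * ∑ y : Ω, |matPow Q t x y - π y| :=
  lumped_tv_le_tv_general Q hQG π
end
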